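/- arXiv:1807.05533 — 8 statements merged into one kernel-verified Lean document; each statement's English description precedes it below -/
import Mathlib

section
/- Let I be a countable set (|I| ≤ ℵ₀) and let τ : ℝ^I → ℝ be a function. Then τ preserves measurability over every measurable space if, and only if, τ preserves measurability over (ℝ, B_ℝ), where B_ℝ is the Borel σ-algebra on ℝ. -/
universe u v

/-- `τ` preserves measurability over the measurable space `Ω`. -/
def PreservesMeasOver {I : Type v} (τ : (I → ℝ) → ℝ)
    (Ω : Type u) [MeasurableSpace Ω] : Prop :=
  ∀ f : I → Ω → ℝ, (∀ i, Measurable (f i)) → Measurable fun x => τ fun i => f i x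

theorem preserves_measurability_iff_over_real {I : Type v} [Countable I]
    (τ : (I → ℝ) → ℝ) :
    (∀ (Ω : Type u) [MeasurableSpace Ω], PreservesMeasOver τ Ω) ↔
      PreservesMeasOver τ ℝ := by
  constructor
  · intro h f hf
    have := h (ULift.{u} ℝ) (fun i x => f i x.down)
      (fun i => (hf i).comp measurable_down)
    have h2 : (fun r : ℝ => τ fun i => f i r) =
        (fun x : ULift.{u} ℝ => τ fun i => f i x.down) ∘ ULift.up := rfl
    rw [h2]
    exact this.comp measurable_up
  · intro h Ω _ f hf
    rcases isEmpty_or_nonempty I with hI | hI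
    · have : (fun x => τ fun i => f i x) = fun _ => τ fun i => (isEmptyElim i : ℝ) := by
        funext x; congr 1; exact Subsingleton.elim _ _
      rw [this]; exact measurable_const
    · have hnc : ¬Countable (I → ℝ) := by
        intro hc
        have hinj : Function.Injective (fun r : ℝ => (fun _ : I => r)) :=
          fun a b hab => congrFun hab hI.some
        exact not_countable hinj.countable
    -- Borel isomorphism between ℝ and ℝ^I
      let e : ℝ ≃ᵐ (I → ℝ) :=
        PolishSpace.measurableEquivOfNotCountable (not_countable (α := ℝ)) hnc
      have hτe : Measurable fun r : ℝ => τ fun i => e r i :=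
        h (fun i r => e r i) (fun i => (measurable_pi_apply i).comp e.measurable)
      have hF : Measurable fun x : Ω => (fun i => f i x) :=
        measurable_pi_lambda _ hf
      have : (fun x => τ fun i => f i x) =
          (fun r : ℝ => τ fun i => e r i) ∘ (e.symm ∘ fun x => fun i => f i x) := by
        funext x
        simp [Function.comp]
      rw [this]
      exact hτe.comp (e.symm.measurable.comp hF)
end

section
/- Let (Ω, F, μ) be a partitionable measure space, let p ∈ [1, ∞), let I be a countable set (|I| ≤ ℵ₀), and let τ : ℝ^I → ℝ. If τ preserves p-integrability over (Ω, F, μ), then there exist a finite subset J ⊆ I and nonnegative real numbers (λ_j)_{j∈J} such that for every v ∈ ℝ^I one has |τ(v)| ≤ Σ_{j∈J} λ_j |v_j|. -/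
open MeasureTheory
open scoped ENNReal

universe u v

/-- `f ∈ L^p(μ)`: `f` is measurable and `∫ |f|^p dμ < ∞`. -/
def MemLpReal {Ω : Type u} [MeasurableSpace Ω] (μ : Measure Ω) (p : ℝ) (f : Ω → ℝ) : Prop :=
  Measurable f ∧ ∫⁻ x, ENNReal.ofReal (|f x| ^ p) ∂μ < ⊤

/-- `τ` preserves `p`-integrability over the measure space `(Ω, μ)`. -/
def PreservesLpOver {I : Type v} (τ : (I → ℝ) → ℝ) (p : ℝ)
    (Ω : Type u) [MeasurableSpace Ω] (μ : Measure Ω) : Prop :=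
  ∀ f : I → Ω → ℝ, (∀ i, MemLpReal μ p (f i)) →
    MemLpReal μ p fun x => τ fun i => f i x

/-- A measure space is partitionable if every sequence of nonnegative reals is attained as
the measures of a sequence of pairwise disjoint measurable sets. -/
def Partitionable {Ω : Type u} [MeasurableSpace Ω] (μ : Measure Ω) : Prop :=
  ∀ a : ℕ → ℝ, (∀ n, 0 ≤ a n) → ∃ A : ℕ → Set Ω,
    (∀ n, MeasurableSet (A n)) ∧ (∀ m n, m ≠ n → Disjoint (A m) (A n)) ∧
    ∀ n, μ (A n) = ENNReal.ofReal (a n)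

/-! If no such bound exists, then for every `n` there is a vector `v n` with
`2 ^ n * |v n i| < |τ (v n)|` for all `i` in the `n`-th set of an exhaustion of `I` by finite
sets. Partitionability provides disjoint sets `A n` of measure `|τ (v n)| ^ (-p)`. The step
function equal to `v n` on `A n` has coordinates in `L^p`, since `∑ₙ |v n i| ^ p μ(A n)` is
eventually dominated by `∑ₙ 2 ^ (-n)`; but its image under `τ` has `∫ |τ ∘ f| ^ p = ∑ₙ 1 = ∞`. -/

open Filter Function

variable {Ω : Type*}

section StepFunction

variable {E : Type*} [AddCommMonoid E] [TopologicalSpace E] {A : ℕ → Set Ω}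

noncomputable def stepFunction (A : ℕ → Set Ω) (c : ℕ → E) (x : Ω) : E :=
  ∑' n, (A n).indicator (fun _ => c n) x

theorem stepFunction_eq_of_mem (hd : Pairwise (Disjoint on A)) (c : ℕ → E) {m : ℕ} {x : Ω}
    (hx : x ∈ A m) : stepFunction A c x = c m := by
  rw [stepFunction, tsum_eq_single m fun n hn =>
    Set.indicator_of_notMem (Set.disjoint_right.mp (hd hn) hx) _, Set.indicator_of_mem hx]

theorem stepFunction_eq_zero_of_notMem (c : ℕ → E) {x : Ω} (hx : ∀ n, x ∉ A n) :
    stepFunction A c x = 0 := by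
  simp [stepFunction, Set.indicator_of_notMem (hx _)]

theorem measurable_stepFunction [MeasurableSpace Ω] [MeasurableSpace E]
    [TopologicalSpace.IsCompletelyPseudoMetrizableSpace E] [SecondCountableTopology E]
    [BorelSpace E] [MeasurableAdd₂ E] (hA : ∀ n, MeasurableSet (A n)) (c : ℕ → E) :
    Measurable (stepFunction A c) :=
  Measurable.tsum fun n => measurable_const.indicator (hA n)

end StepFunction

variable [MeasurableSpace Ω] {μ : Measure Ω}

section DisjointUnion

variable {A : ℕ → Set Ω} {g : Ω → ℝ≥0∞} {b : ℕ → ℝ≥0∞}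

theorem setLIntegral_iUnion_eq_tsum_of_eqOn (hA : ∀ n, MeasurableSet (A n))
    (hd : Pairwise (Disjoint on A)) (hg : ∀ n, ∀ x ∈ A n, g x = b n) :
    ∫⁻ x in ⋃ n, A n, g x ∂μ = ∑' n, b n * μ (A n) := by
  rw [lintegral_iUnion hA hd]
  exact tsum_congr fun n => by rw [setLIntegral_congr_fun (hA n) (hg n), setLIntegral_const]

theorem tsum_mul_measure_le_lintegral (hA : ∀ n, MeasurableSet (A n))
    (hd : Pairwise (Disjoint on A)) (hg : ∀ n, ∀ x ∈ A n, g x = b n) :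
    ∑' n, b n * μ (A n) ≤ ∫⁻ x, g x ∂μ :=
  setLIntegral_iUnion_eq_tsum_of_eqOn hA hd hg ▸ setLIntegral_le_lintegral _ _

theorem lintegral_eq_tsum_mul_measure (hA : ∀ n, MeasurableSet (A n))
    (hd : Pairwise (Disjoint on A)) (hg : ∀ n, ∀ x ∈ A n, g x = b n)
    (hg₀ : ∀ x, (∀ n, x ∉ A n) → g x = 0) :
    ∫⁻ x, g x ∂μ = ∑' n, b n * μ (A n) := by
  rw [← setLIntegral_iUnion_eq_tsum_of_eqOn hA hd hg, setLIntegral_eq_of_support_subset]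
  intro x hx
  by_contra hxA
  exact hx (hg₀ x fun n hn => hxA (Set.mem_iUnion_of_mem n hn))

end DisjointUnion

section Lp

variable {A : ℕ → Set Ω} {p : ℝ}

theorem memLpReal_stepFunction (hp : 0 < p) (hA : ∀ n, MeasurableSet (A n))
    (hd : Pairwise (Disjoint on A)) {c : ℕ → ℝ}
    (hc : ∑' n, ENNReal.ofReal (|c n| ^ p) * μ (A n) < ∞) :
    MemLpReal μ p (stepFunction A c) := by
  refine ⟨measurable_stepFunction hA c, ?_⟩
  rwa [lintegral_eq_tsum_mul_measure hA hd
    (fun n x hx => by rw [stepFunction_eq_of_mem hd c hx])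
    (fun x hx => by rw [stepFunction_eq_zero_of_notMem c hx, abs_zero,
      Real.zero_rpow hp.ne', ENNReal.ofReal_zero])]

theorem not_memLpReal_of_tsum_eq_top (hA : ∀ n, MeasurableSet (A n))
    (hd : Pairwise (Disjoint on A)) {g : Ω → ℝ} {d : ℕ → ℝ} (hg : ∀ n, ∀ x ∈ A n, g x = d n)
    (htop : ∑' n, ENNReal.ofReal (|d n| ^ p) * μ (A n) = ∞) :
    ¬ MemLpReal μ p g := by
  rintro ⟨-, hfin⟩
  refine (tsum_mul_measure_le_lintegral hA hd fun n x hx => ?_).trans_lt hfin |>.ne htop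
  rw [hg n x hx]

theorem Partitionable.not_preservesLpOver {I : Type*} (hpart : Partitionable μ) (hp : 0 < p)
    {τ : (I → ℝ) → ℝ} {v : ℕ → I → ℝ} (hτ : ∀ n, τ (v n) ≠ 0)
    (hsum : ∀ i, Summable fun n => |v n i| ^ p / |τ (v n)| ^ p) :
    ¬ PreservesLpOver τ p Ω μ := by
  have hpos : ∀ n, 0 < |τ (v n)| ^ p := fun n => Real.rpow_pos_of_pos (abs_pos.mpr (hτ n)) p
  obtain ⟨A, hA, hd, hμA⟩ :=
    hpart (fun n => (|τ (v n)| ^ p)⁻¹) fun n => (inv_pos.mpr (hpos n)).le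
  have hd : Pairwise (Disjoint on A) := fun m n => hd m n
  intro h
  refine not_memLpReal_of_tsum_eq_top hA hd (d := fun n => τ (v n))
    (fun n x hx => congrArg τ (funext fun i => stepFunction_eq_of_mem hd (v · i) hx)) ?_
    (h (fun i => stepFunction A (v · i)) fun i => memLpReal_stepFunction hp hA hd ?_)
  · simp_rw [hμA, ← ENNReal.ofReal_mul (hpos _).le, mul_inv_cancel₀ (hpos _).ne',
      ENNReal.ofReal_one]
    exact ENNReal.tsum_const_eq_top_of_ne_zero one_ne_zero
  · simp_rw [hμA, ← ENNReal.ofReal_mul (Real.rpow_nonneg (abs_nonneg _) p), ← div_eq_mul_inv]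
    rw [← ENNReal.ofReal_tsum_of_nonneg (fun n => by positivity) (hsum i)]
    exact ENNReal.ofReal_lt_top

end Lp

theorem rpow_div_rpow_le_of_le_mul {x t ε p : ℝ} (hx : 0 ≤ x) (ht : 0 < t) (hε : ε ≤ 1)
    (hxt : x ≤ ε * t) (hp : 1 ≤ p) : x ^ p / t ^ p ≤ ε := by
  have hxt' : x / t ≤ ε := by rwa [div_le_iff₀ ht]
  calc x ^ p / t ^ p = (x / t) ^ p := (Real.div_rpow hx ht.le p).symm
    _ ≤ (x / t) ^ (1 : ℝ) :=
      Real.rpow_le_rpow_of_exponent_ge' (by positivity) (hxt'.trans hε) zero_le_one hp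
    _ ≤ ε := by rwa [Real.rpow_one]

theorem exists_finset_eventually_mem (I : Type*) [Countable I] :
    ∃ J : ℕ → Finset I, ∀ i, ∀ᶠ n in atTop, i ∈ J n := by
  obtain ⟨e, he⟩ := exists_injective_nat I
  refine ⟨fun n => (Finset.range (n + 1)).preimage e he.injOn, fun i => ?_⟩
  filter_upwards [Filter.eventually_ge_atTop (e i)] with n hn
  simpa [Nat.lt_succ_iff] using hn

theorem preservesLpOver_partitionable_bound {Ω : Type u} [MeasurableSpace Ω]
    (μ : Measure Ω) (hpart : Partitionable μ) (p : ℝ) (hp : 1 ≤ p)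
    {I : Type v} [Countable I] (τ : (I → ℝ) → ℝ)
    (h : PreservesLpOver τ p Ω μ) :
    ∃ (J : Finset I) (lam : I → ℝ), (∀ j ∈ J, 0 ≤ lam j) ∧
      ∀ v : I → ℝ, |τ v| ≤ ∑ j ∈ J, lam j * |v j| := by
  by_contra hbound
  push Not at hbound
  obtain ⟨J, hJ⟩ := exists_finset_eventually_mem I
  choose v hv using fun n : ℕ => hbound (J n) (fun _ => 2 ^ n) fun _ _ => by positivity
  have hτ : ∀ n, 0 < |τ (v n)| := fun n =>
    (Finset.sum_nonneg fun _ _ => by positivity).trans_lt (hv n)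
  refine hpart.not_preservesLpOver (by linarith) (fun n => abs_pos.mp (hτ n)) (fun i => ?_) h
  refine Summable.of_norm_bounded_eventually_nat summable_geometric_two ?_
  filter_upwards [hJ i] with n hin
  have hvi : |v n i| ≤ (1 / 2) ^ n * |τ (v n)| := by
    have := (Finset.single_le_sum (fun j _ => by positivity) hin).trans_lt (hv n)
    rw [one_div, inv_pow, inv_mul_eq_div, le_div_iff₀ (by positivity)]
    linarith
  rw [Real.norm_of_nonneg (by positivity)]
  exact rpow_div_rpow_le_of_le_mul (abs_nonneg _) (hτ n)
    (pow_le_one₀ (by norm_num) (by norm_num)) hvi hp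
end

section
/- Let (Ω, F, μ) be a conditionally partitionable measure space, let p ∈ [1, ∞), let I be a countable set (|I| ≤ ℵ₀), and let τ : ℝ^I → ℝ. If τ preserves p-integrability over (Ω, F, μ), then there exist a finite subset J ⊆ I, nonnegative real numbers (λ_j)_{j∈J}, and a nonnegative real number k such that for every v ∈ ℝ^I one has |τ(v)| ≤ k + Σ_{j∈J} λ_j |v_j|. -/
/-!
If no bound holds, then for every finite `J ⊆ I` and `K ≥ 0` some `v` has
`|τ v| > K (1 + ∑_{j ∈ J} |v j|)`. Exhausting `I` by finite sets `J_n` and taking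
`K_n = max (2^n) (1 / b_n)` gives vectors `v_n` with `T_n := |τ v_n|^p ≥ 1 / b_n` and, for each
fixed `i`, eventually `|v_n i|^p / T_n ≤ 2^{-n}`. Partitionability yields disjoint `A_n` with
`μ A_n = 1 / T_n`; the function `f` equal to `v_n` on `A_n` and to `0` elsewhere has all its
coordinates in `L^p`, yet `∫ |τ ∘ f|^p ≥ ∑ T_n μ A_n = ∞`.
-/

open MeasureTheory

universe u v

/-- A measure space is conditionally partitionable if there is a sequence of strictly
positive reals `b` such that every sequence of nonnegative reals dominated by `b` is
attained as the measures of a sequence of pairwise disjoint measurable sets. -/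
def CondPartitionable {Ω : Type u} [MeasurableSpace Ω] (μ : Measure Ω) : Prop :=
  ∃ b : ℕ → ℝ, (∀ n, 0 < b n) ∧
    ∀ a : ℕ → ℝ, (∀ n, 0 ≤ a n) → (∀ n, a n ≤ b n) → ∃ A : ℕ → Set Ω,
      (∀ n, MeasurableSet (A n)) ∧ (∀ m n, m ≠ n → Disjoint (A m) (A n)) ∧
      ∀ n, μ (A n) = ENNReal.ofReal (a n)

open Filter Function
open scoped ENNReal

theorem Real.rpow_div_rpow_le_inv_of_mul_le {p K x T : ℝ} (hp : 1 ≤ p) (hK : 1 ≤ K)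
    (hx : 0 ≤ x) (hxT : K * x ≤ T) : x ^ p / T ^ p ≤ K⁻¹ := by
  have hT : 0 ≤ T := le_trans (by positivity) hxT
  have hxT' : x / T ≤ K⁻¹ := by
    rcases hT.eq_or_lt with rfl | hT
    · simp only [div_zero]; positivity
    · rw [div_le_iff₀ hT, inv_mul_eq_div, le_div_iff₀ (by positivity), mul_comm]
      exact hxT
  rw [← Real.div_rpow hx hT]
  exact (Real.rpow_le_self_of_le_one (by positivity)
    (hxT'.trans (inv_le_one_of_one_le₀ hK)) hp).trans hxT'

theorem summable_rpow_div_rpow_of_eventually_two_pow_mul_le {p : ℝ} (hp : 1 ≤ p) {x T : ℕ → ℝ}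
    (hx : ∀ n, 0 ≤ x n) (h : ∀ᶠ n in atTop, 2 ^ n * x n ≤ T n) :
    Summable fun n => x n ^ p / T n ^ p := by
  refine Summable.of_norm_bounded_eventually_nat summable_geometric_two (h.mono fun n hn => ?_)
  rw [Real.norm_of_nonneg (div_nonneg (Real.rpow_nonneg (hx n) p) ?_), one_div_pow, one_div]
  · exact Real.rpow_div_rpow_le_inv_of_mul_le hp (one_le_pow₀ one_le_two) (hx n) hn
  · exact Real.rpow_nonneg ((mul_nonneg (by positivity) (hx n)).trans hn) p

section DisjointPieces

variable {Ω : Type*} [MeasurableSpace Ω] {A : ℕ → Set Ω}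

theorem exists_measurable_eq_on_disjoint {β : Type*} [MeasurableSpace β]
    (hAm : ∀ n, MeasurableSet (A n)) (hAd : Pairwise (Disjoint on A)) (c : ℕ → β) (c₀ : β) :
    ∃ g : Ω → β, Measurable g ∧ (∀ n, ∀ x ∈ A n, g x = c n) ∧ ∀ x ∉ ⋃ n, A n, g x = c₀ := by
  set t : Option ℕ → Set Ω := fun o => o.elim (⋃ n, A n)ᶜ A
  have ht : Pairwise (Disjoint on t) := by
    rintro (_ | m) (_ | n) hmn
    · exact absurd rfl hmn
    · exact disjoint_compl_left.mono_right (Set.subset_iUnion A n)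
    · exact disjoint_compl_right.mono_left (Set.subset_iUnion A m)
    · exact hAd fun h => hmn (congrArg some h)
  obtain ⟨g, hgm, hg⟩ := exists_measurable_piecewise t
    (fun o => o.rec (MeasurableSet.iUnion hAm).compl hAm)
    (fun o _ => o.elim c₀ c) (fun _ => measurable_const)
    fun o o' hoo' x hx => (Set.disjoint_iff.1 (ht hoo') hx).elim
  exact ⟨g, hgm, fun n => hg (some n), hg none⟩

theorem setLIntegral_iUnion_eq_tsum_of_eq {β : Type*} (μ : Measure Ω)
    (hAm : ∀ n, MeasurableSet (A n)) (hAd : Pairwise (Disjoint on A))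
    {g : Ω → β} {c : ℕ → β} (hg : ∀ n, ∀ x ∈ A n, g x = c n) (F : β → ℝ≥0∞) :
    ∫⁻ x in ⋃ n, A n, F (g x) ∂μ = ∑' n, F (c n) * μ (A n) := by
  rw [lintegral_iUnion hAm hAd]
  congr 1 with n
  rw [setLIntegral_congr_fun (hAm n) fun x hx => by rw [hg n x hx], setLIntegral_const]

end DisjointPieces

theorem not_preservesLpOver_of_tsum_eq_top {Ω : Type*} [MeasurableSpace Ω] {μ : Measure Ω}
    {A : ℕ → Set Ω} (hAm : ∀ n, MeasurableSet (A n)) (hAd : Pairwise (Disjoint on A))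
    {I : Type*} {τ : (I → ℝ) → ℝ} {p : ℝ} (hp : 0 < p) (v : ℕ → I → ℝ)
    (hv : ∀ i, ∑' n, ENNReal.ofReal (|v n i| ^ p) * μ (A n) ≠ ∞)
    (hτ : ∑' n, ENNReal.ofReal (|τ (v n)| ^ p) * μ (A n) = ∞) :
    ¬PreservesLpOver τ p Ω μ := by
  intro h
  obtain ⟨g, hgm, hgA, hg0⟩ := exists_measurable_eq_on_disjoint hAm hAd v 0
  have hgLp : ∀ i, MemLpReal μ p fun x => g x i := by
    refine fun i => ⟨(measurable_pi_apply i).comp hgm, ?_⟩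
    show ∫⁻ x, ENNReal.ofReal (|g x i| ^ p) ∂μ < ∞
    rw [← lintegral_add_compl _ (MeasurableSet.iUnion hAm),
      setLIntegral_iUnion_eq_tsum_of_eq μ hAm hAd (fun n x hx => congrFun (hgA n x hx) i)
        fun y => ENNReal.ofReal (|y| ^ p),
      setLIntegral_congr_fun (MeasurableSet.iUnion hAm).compl
        fun x hx => by rw [hg0 x hx, Pi.zero_apply, abs_zero, Real.zero_rpow hp.ne']]
    simpa [lt_top_iff_ne_top] using hv i
  refine (h _ hgLp).2.ne (top_le_iff.1 ?_)
  calc ∞ = ∫⁻ x in ⋃ n, A n, ENNReal.ofReal (|τ (g x)| ^ p) ∂μ := by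
        rw [setLIntegral_iUnion_eq_tsum_of_eq μ hAm hAd hgA fun w => ENNReal.ofReal (|τ w| ^ p),
          hτ]
    _ ≤ _ := setLIntegral_le_lintegral _ _

theorem exists_seq_lt_abs_of_forall_exists_lt {I : Type*} [Countable I] {τ : (I → ℝ) → ℝ}
    (hτ : ∀ (J : Finset I) (K : ℝ), 0 ≤ K → ∃ v : I → ℝ, K + ∑ j ∈ J, K * |v j| < |τ v|)
    (K : ℕ → ℝ) (hK : ∀ n, 0 ≤ K n) :
    ∃ v : ℕ → I → ℝ, (∀ n, K n < |τ (v n)|) ∧ ∀ i, ∀ᶠ n in atTop, K n * |v n i| < |τ (v n)| := by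
  obtain ⟨e, he⟩ := Countable.exists_injective_nat I
  choose v hv using fun n => hτ ((Finset.range n).preimage e he.injOn) (K n) (hK n)
  have hsum : ∀ n, 0 ≤ ∑ j ∈ (Finset.range n).preimage e he.injOn, K n * |v n j| :=
    fun n => Finset.sum_nonneg fun j _ => mul_nonneg (hK n) (abs_nonneg _)
  refine ⟨v, fun n => (le_add_of_nonneg_right (hsum n)).trans_lt (hv n), fun i => ?_⟩
  filter_upwards [eventually_gt_atTop (e i)] with n hn
  calc K n * |v n i| ≤ ∑ j ∈ (Finset.range n).preimage e he.injOn, K n * |v n j| :=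
        Finset.single_le_sum (fun j _ => mul_nonneg (hK n) (abs_nonneg _))
          (by simpa using hn)
    _ ≤ K n + _ := le_add_of_nonneg_left (hK n)
    _ < |τ (v n)| := hv n

theorem preservesLpOver_condPartitionable_bound {Ω : Type u} [MeasurableSpace Ω]
    (μ : Measure Ω) (hpart : CondPartitionable μ) (p : ℝ) (hp : 1 ≤ p)
    {I : Type v} [Countable I] (τ : (I → ℝ) → ℝ)
    (h : PreservesLpOver τ p Ω μ) :
    ∃ (J : Finset I) (lam : I → ℝ) (k : ℝ), (∀ j ∈ J, 0 ≤ lam j) ∧ 0 ≤ k ∧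
      ∀ v : I → ℝ, |τ v| ≤ k + ∑ j ∈ J, lam j * |v j| := by
  by_contra! hcon
  obtain ⟨b, hb0, hb⟩ := hpart
  set K : ℕ → ℝ := fun n => max (2 ^ n) (b n)⁻¹
  have hK1 : ∀ n, 1 ≤ K n := fun n => le_max_of_le_left (one_le_pow₀ one_le_two)
  obtain ⟨v, hvτ, hvi⟩ := exists_seq_lt_abs_of_forall_exists_lt
    (fun J c hc => hcon J (fun _ => c) c (fun _ _ => hc) hc) K fun n => zero_le_one.trans (hK1 n)
  have hKT : ∀ n, K n ≤ |τ (v n)| ^ p := fun n => (hvτ n).le.trans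
    (Real.self_le_rpow_of_one_le ((hK1 n).trans (hvτ n).le) hp)
  have hT0 : ∀ n, 0 < |τ (v n)| ^ p := fun n => zero_lt_one.trans_le ((hK1 n).trans (hKT n))
  obtain ⟨A, hAm, hAd, hAμ⟩ := hb (fun n => (|τ (v n)| ^ p)⁻¹)
    (fun n => inv_nonneg.2 (hT0 n).le)
    fun n => inv_le_of_inv_le₀ (hb0 n) ((le_max_right _ _).trans (hKT n))
  have hμA : ∀ n x, ENNReal.ofReal x * μ (A n) = ENNReal.ofReal (x / |τ (v n)| ^ p) := fun n x => by
    rw [hAμ, ← ENNReal.ofReal_mul' (inv_nonneg.2 (hT0 n).le), div_eq_mul_inv]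
  refine not_preservesLpOver_of_tsum_eq_top hAm (fun m n => hAd m n) (by linarith) v
    (fun i => ?_) ?_ h
  · simp only [hμA]
    refine (summable_rpow_div_rpow_of_eventually_two_pow_mul_le hp (fun n => abs_nonneg _)
      ((hvi i).mono fun n hn => ?_)).tsum_ofReal_ne_top
    exact (mul_le_mul_of_nonneg_right (le_max_left _ _) (abs_nonneg _)).trans hn.le
  · simp only [hμA, div_self (hT0 _).ne', ENNReal.ofReal_one]
    exact ENNReal.tsum_const_eq_top_of_ne_zero one_ne_zero
end

section
/- Let I be a countable set (|I| ≤ ℵ₀), let τ : ℝ^I → ℝ and let p ∈ [1, ∞). Then τ preserves p-integrability (over every measure space) if, and only if, τ preserves p-integrability over (ℝ, B_ℝ, Leb), where B_ℝ is the Borel σ-algebra on ℝ and Leb is the restriction of the Lebesgue measure to B_ℝ. -/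
open MeasureTheory

universe u v

/-!
A measurable `τ` with `|τ x| ≤ C * ∑ j ∈ J, |x j|` for a finite `J ⊆ I` preserves
`p`-integrability over every measure space, and preservation over Lebesgue measure forces both
properties.

Measurability: the Liouville numbers form an uncountable Borel null set, so `ℝ^I` is
Borel-isomorphic to a null subset `L` of `ℝ`. The coordinates of the inverse isomorphism, extended
by `0` off `L`, vanish almost everywhere, hence lie in `L^p`; `τ` applied to them and composed with
the isomorphism is `τ` itself.

Growth bound: otherwise, enumerating `I`, there are `x n` with
`|τ (x n)| > 2 ^ n * ∑ |x n j|` over the first `n` coordinates. Let the family take the value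
`x n` on disjoint intervals of length `|τ (x n)| ^ (-p)` and `0` elsewhere (so `τ 0 = 0` is
needed, which holds since nonzero constants are not Lebesgue integrable). Each coordinate then has
`∫ |f i| ^ p = ∑ (|x n i| / |τ (x n)|) ^ p < ∞` by geometric decay, while
`∫ |τ ∘ f| ^ p = ∑ 1 = ∞`.
-/

open Set Filter Function
open scoped ENNReal

theorem not_countable_setOf_liouville : ¬{x : ℝ | Liouville x}.Countable := fun h => by
  obtain ⟨x, hx, hx'⟩ := (Dense.inter_of_Gδ IsGδ.setOfPred_liouville h.isGδ_compl
    dense_liouville (h.dense_compl ℝ)).nonempty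
  exact hx' hx

theorem exists_measurableEmbedding_real_volume_range_eq_zero (α : Type*) [MeasurableSpace α]
    [StandardBorelSpace α] : ∃ e : α → ℝ, MeasurableEmbedding e ∧ volume (range e) = 0 := by
  have hL : MeasurableSet {x : ℝ | Liouville x} := IsGδ.setOfPred_liouville.measurableSet
  have := hL.standardBorel
  obtain ⟨e₀, he₀⟩ := exists_measurableEmbedding_real α
  let φ : ℝ ≃ᵐ {x : ℝ | Liouville x} := PolishSpace.measurableEquivOfNotCountable
    not_countable (countable_coe_iff.not.2 not_countable_setOf_liouville)
  refine ⟨(↑) ∘ φ ∘ e₀, (MeasurableEmbedding.subtype_coe hL).comp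
    (φ.measurableEmbedding.comp he₀), measure_mono_null ?_ volume_setOfPred_liouville⟩
  rintro _ ⟨a, rfl⟩
  exact (φ (e₀ a)).2

theorem exists_measurable_preimage_succ_eq {α : Type*} [MeasurableSpace α] {E : ℕ → Set α}
    (hE : ∀ n, MeasurableSet (E n)) (hd : Pairwise (Disjoint on E)) :
    ∃ N : α → ℕ, Measurable N ∧ ∀ n, N ⁻¹' {n + 1} = E n := by
  classical
  let N (t : α) : ℕ := if h : ∃ n, t ∈ E n then Nat.find h + 1 else 0
  have hN (n : ℕ) : N ⁻¹' {n + 1} = E n := by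
    ext t
    simp only [N, mem_preimage, mem_singleton_iff]
    split_ifs with h
    · refine ⟨fun hn => ?_, fun ht => ?_⟩
      · exact Nat.succ_injective hn ▸ Nat.find_spec h
      · refine congrArg (· + 1) (?_ : Nat.find h = n)
        by_contra hne
        exact disjoint_left.1 (hd hne) (Nat.find_spec h) ht
    · exact iff_of_false id fun ht => h ⟨n, ht⟩
  refine ⟨N, measurable_to_countable' fun k => ?_, hN⟩
  cases k with
  | zero =>
    have : N ⁻¹' {0} = (⋃ n, E n)ᶜ := by ext t; simp [N]
    exact this ▸ (MeasurableSet.iUnion hE).compl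
  | succ n => exact hN n ▸ hE n

theorem exists_measurable_volume_preimage_succ (ε : ℕ → ℝ) (hε : ∀ n, 0 ≤ ε n) :
    ∃ N : ℝ → ℕ, Measurable N ∧ ∀ n, volume (N ⁻¹' {n + 1}) = ENNReal.ofReal (ε n) := by
  let a (n : ℕ) : ℝ := ∑ m ∈ Finset.range n, ε m
  have ha_succ (n : ℕ) : a (n + 1) = a n + ε n := Finset.sum_range_succ ε n
  have ha : Monotone a := monotone_nat_of_le_succ fun n => by simp [ha_succ, hε n]
  obtain ⟨N, hN, hpre⟩ := exists_measurable_preimage_succ_eq (fun _ => measurableSet_Ico)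
    ha.pairwise_disjoint_on_Ico_succ
  exact ⟨N, hN, fun n => by simp [hpre, ha_succ]⟩

theorem lintegral_comp_eq_tsum_succ {α : Type*} [MeasurableSpace α] {μ : Measure α}
    {N : α → ℕ} (hN : Measurable N) {g : ℕ → ℝ≥0∞} (hg : g 0 = 0) :
    ∫⁻ t, g (N t) ∂μ = ∑' n, g (n + 1) * μ (N ⁻¹' {n + 1}) := by
  rw [← lintegral_map (measurable_of_countable g) hN, lintegral_countable',
    tsum_eq_zero_add' ENNReal.summable]
  simp [hg, Measure.map_apply hN (measurableSet_singleton _)]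

theorem tsum_ofReal_rpow_lt_top {r : ℕ → ℝ} {c p : ℝ} (hp : 0 < p) (hc₀ : 0 ≤ c) (hc : c < 1)
    (hr₀ : ∀ n, 0 ≤ r n) (hr : ∀ᶠ n in atTop, r n ≤ c ^ n) :
    ∑' n, ENNReal.ofReal (r n ^ p) < ∞ := by
  have hsum : Summable fun n => r n ^ p := by
    refine Summable.of_norm_bounded_eventually_nat
      (summable_geometric_of_lt_one (Real.rpow_nonneg hc₀ p) (Real.rpow_lt_one hc₀ hc hp)) ?_
    filter_upwards [hr] with n hn
    rw [Real.norm_of_nonneg (Real.rpow_nonneg (hr₀ n) p), Real.rpow_pow_comm hc₀]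
    exact Real.rpow_le_rpow (hr₀ n) hn hp.le
  rw [← ENNReal.ofReal_tsum_of_nonneg (fun n => Real.rpow_nonneg (hr₀ n) p) hsum]
  exact ENNReal.ofReal_lt_top

section MemLpReal

variable {Ω : Type*} [MeasurableSpace Ω] {μ : Measure Ω} {p : ℝ} {f : Ω → ℝ}

theorem memLpReal_iff_memLp (hp : 0 < p) :
    MemLpReal μ p f ↔ Measurable f ∧ MemLp f (ENNReal.ofReal p) μ := by
  have hlt := eLpNorm_lt_top_iff_lintegral_rpow_enorm_lt_top (f := f) (μ := μ)
    (ENNReal.ofReal_ne_zero_iff.2 hp) ENNReal.ofReal_ne_top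
  simp only [ENNReal.toReal_ofReal hp.le, Real.enorm_eq_ofReal_abs,
    ENNReal.ofReal_rpow_of_nonneg (abs_nonneg _) hp.le] at hlt
  exact ⟨fun ⟨hf, hint⟩ => ⟨hf, hf.aestronglyMeasurable, hlt.2 hint⟩,
    fun ⟨hf, _, hnorm⟩ => ⟨hf, hlt.1 hnorm⟩⟩

theorem memLpReal_of_ae_eq_zero (hp : p ≠ 0) (hf : Measurable f) (h : f =ᵐ[μ] 0) :
    MemLpReal μ p f := by
  have h' : (fun x => ENNReal.ofReal (|f x| ^ p)) =ᵐ[μ] 0 :=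
    h.mono fun x hx => by simp [hx, Real.zero_rpow hp]
  exact ⟨hf, by simp [lintegral_congr_ae h']⟩

theorem memLpReal_comp_measurableEquiv_iff {Ω' : Type*} [MeasurableSpace Ω'] {ν : Measure Ω'}
    (e : Ω ≃ᵐ Ω') (he : MeasurePreserving e μ ν) {g : Ω' → ℝ} :
    MemLpReal μ p (g ∘ e) ↔ MemLpReal ν p g := by
  rw [MemLpReal, MemLpReal, e.measurable_comp_iff, ← he.lintegral_comp_emb e.measurableEmbedding]
  rfl

theorem MemLpReal.of_abs_le_mul_sum {ι : Type*} (hp : 0 < p) {J : Finset ι} {C : ℝ}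
    {g : ι → Ω → ℝ} (hf : Measurable f) (hg : ∀ j ∈ J, MemLpReal μ p (g j))
    (hle : ∀ x, |f x| ≤ C * ∑ j ∈ J, |g j x|) : MemLpReal μ p f := by
  have hsum : MemLp (fun x => C * ∑ j ∈ J, |g j x|) (ENNReal.ofReal p) μ :=
    (memLp_finsetSum J fun j hj => ((memLpReal_iff_memLp hp).1 (hg j hj)).2.abs).const_mul C
  exact (memLpReal_iff_memLp hp).2 ⟨hf, hsum.of_le hf.aestronglyMeasurable
    (ae_of_all _ fun x => (hle x).trans (le_abs_self _))⟩

end MemLpReal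

namespace PreservesLpOver

variable {I : Type*} {τ : (I → ℝ) → ℝ} {p : ℝ}

theorem of_measurableEquiv {α β : Type*} [MeasurableSpace α] [MeasurableSpace β]
    {μ : Measure α} {ν : Measure β} (H : PreservesLpOver τ p α μ) (e : α ≃ᵐ β)
    (he : MeasurePreserving e μ ν) : PreservesLpOver τ p β ν := fun f hf => by
  rw [← memLpReal_comp_measurableEquiv_iff e he]
  exact H (fun i => f i ∘ e) fun i => (memLpReal_comp_measurableEquiv_iff e he).2 (hf i)

theorem map_zero {Ω : Type*} [MeasurableSpace Ω] {μ : Measure Ω} (hp : p ≠ 0)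
    (hμ : μ univ = ∞) (H : PreservesLpOver τ p Ω μ) : τ 0 = 0 := by
  have h := (H (fun _ => 0) fun _ => memLpReal_of_ae_eq_zero hp measurable_const ae_eq_rfl).2
  simp only [Pi.zero_apply, lintegral_const, hμ] at h
  by_contra hne
  have hpos : 0 < |τ 0| ^ p := Real.rpow_pos_of_pos (abs_pos.2 hne) p
  exact h.ne (ENNReal.mul_top (ENNReal.ofReal_pos.2 hpos).ne')

theorem measurable [Countable I] (hp : p ≠ 0) (H : PreservesLpOver τ p ℝ volume) :
    Measurable τ := by
  obtain ⟨e, he, hnull⟩ := exists_measurableEmbedding_real_volume_range_eq_zero (I → ℝ)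
  obtain ⟨g, hg, hge⟩ := he.exists_measurable_extend measurable_id fun _ => ⟨0⟩
  let f (i : I) : ℝ → ℝ := (range e).indicator fun t => g t i
  have hf (i : I) : MemLpReal volume p (f i) :=
    memLpReal_of_ae_eq_zero hp (((measurable_pi_apply i).comp hg).indicator he.measurableSet_range)
      ((indicator_ae_eq_of_ae_eq_set (ae_eq_empty.2 hnull)).trans (by rw [indicator_empty]; rfl))
  have hτ : τ = (fun t => τ fun i => f i t) ∘ e :=
    funext fun y => by simp [f, show g (e y) = y from congrFun hge y]
  exact hτ ▸ (H f hf).1.comp he.measurable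

theorem exists_abs_le_mul_sum_abs [Countable I] (hp : 0 < p)
    (H : PreservesLpOver τ p ℝ volume) :
    ∃ (J : Finset I) (C : ℝ), ∀ x, |τ x| ≤ C * ∑ j ∈ J, |x j| := by
  obtain ⟨enc, henc⟩ := Countable.exists_injective_nat I
  let J (n : ℕ) : Finset I := (Finset.range n).preimage enc henc.injOn
  by_contra! hcon
  choose x hx using fun n => hcon (J n) (2 ^ n)
  have hτx (n : ℕ) : 0 < |τ (x n)| := lt_of_le_of_lt (by positivity) (hx n)
  obtain ⟨N, hN, hvol⟩ :=
    exists_measurable_volume_preimage_succ (fun n => (|τ (x n)| ^ p)⁻¹) fun n => by positivity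
  -- `N = 0` off the intervals, where the family takes the value `0`
  let y : ℕ → I → ℝ := fun | 0 => 0 | n + 1 => x n
  have hlintegral {g : (I → ℝ) → ℝ} (hg : g 0 = 0) :
      ∫⁻ t, ENNReal.ofReal (|g (y (N t))| ^ p) =
        ∑' n, ENNReal.ofReal ((|g (x n)| / |τ (x n)|) ^ p) := by
    rw [lintegral_comp_eq_tsum_succ hN (g := fun k => ENNReal.ofReal (|g (y k)| ^ p))
      (by simp [y, hg, Real.zero_rpow hp.ne'])]
    refine tsum_congr fun n => ?_
    rw [hvol, ← ENNReal.ofReal_mul (by positivity), Real.div_rpow (abs_nonneg _) (abs_nonneg _),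
      div_eq_mul_inv]
  have hf (i : I) : MemLpReal volume p fun t => y (N t) i := by
    refine ⟨(measurable_of_countable fun k => y k i).comp hN, ?_⟩
    rw [hlintegral (g := fun v => v i) rfl]
    refine tsum_ofReal_rpow_lt_top hp (by norm_num : (0:ℝ) ≤ 2⁻¹) (by norm_num)
      (fun n => by positivity) ?_
    filter_upwards [eventually_gt_atTop (enc i)] with n hn
    have hi : |x n i| ≤ ∑ j ∈ J n, |x n j| :=
      Finset.single_le_sum (fun j _ => abs_nonneg (x n j)) (by simpa [J] using hn)
    rw [div_le_iff₀ (hτx n), inv_pow, inv_mul_eq_div, le_div_iff₀ (by positivity), mul_comm]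
    exact (mul_le_mul_of_nonneg_left hi (by positivity)).trans (hx n).le
  have hτ := (H _ hf).2
  rw [hlintegral (H.map_zero hp.ne' Real.volume_univ)] at hτ
  simp [fun n => div_self (hτx n).ne'] at hτ

end PreservesLpOver

theorem preserves_p_integrability_iff_over_lebesgue {I : Type v} [Countable I]
    (τ : (I → ℝ) → ℝ) (p : ℝ) (hp : 1 ≤ p) :
    (∀ (Ω : Type u) [MeasurableSpace Ω] (μ : Measure Ω), PreservesLpOver τ p Ω μ) ↔
      PreservesLpOver τ p ℝ volume := by
  have hp₀ : 0 < p := zero_lt_one.trans_le hp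
  refine ⟨fun H => ?_, fun H Ω _ μ f hf => ?_⟩
  · let e : ULift.{u} ℝ ≃ᵐ ℝ := MeasurableEquiv.ulift
    exact (H (ULift ℝ) (volume.map e.symm)).of_measurableEquiv e
      ((e.symm.measurable.measurePreserving volume).symm e.symm)
  · obtain ⟨J, C, hτ⟩ := H.exists_abs_le_mul_sum_abs hp₀
    have hτf := (H.measurable hp₀.ne').comp (measurable_pi_lambda _ fun i => (hf i).1)
    exact MemLpReal.of_abs_le_mul_sum hp₀ hτf (fun j _ => hf j) fun x => hτ _
end

section
/- Let B be a lattice endowed with an operation ⋎ assigning to each g ∈ B and each sequence (f_n)_{n∈ℕ} in B an element ⋎^g_{n∈ℕ} f_n ∈ B, satisfying for all g, h ∈ B and all sequences (f_n)_{n∈ℕ}: (TS1) ⋎^g_{n∈ℕ} f_n = ⋎^g_{n∈ℕ} (f_n ∧ g); (TS2) ⋎^g_{n∈ℕ} f_n = (f_0 ∧ g) ∨ (⋎^g_{n∈ℕ} f_{n+1}); (TS3) ⋎^g_{n∈ℕ} (f_n ∧ h) ≤ h. Then B is Dedekind σ-complete, and for all g ∈ B and all sequences (f_n)_{n∈ℕ},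 ⋎^g_{n∈ℕ} f_n is the supremum of the set {f_n ∧ g : n ∈ ℕ}. -/
/-- A partially ordered set is Dedekind σ-complete if every nonempty countable subset that
admits an upper bound admits a supremum (least upper bound). -/
def DedekindSigmaComplete (B : Type*) [Preorder B] : Prop :=
  ∀ A : Set B, A.Nonempty → A.Countable → (∃ b, b ∈ upperBounds A) → ∃ s, IsLUB A s

theorem truncsup_axioms_imply_dedekind {B : Type*} [Lattice B]
    (ts : B → (ℕ → B) → B)
    (hTS1 : ∀ (g : B) (f : ℕ → B), ts g f = ts g fun n => f n ⊓ g)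
    (hTS2 : ∀ (g : B) (f : ℕ → B), ts g f = (f 0 ⊓ g) ⊔ ts g fun n => f (n + 1))
    (hTS3 : ∀ (g h : B) (f : ℕ → B), ts g (fun n => f n ⊓ h) ≤ h) :
    DedekindSigmaComplete B ∧
      ∀ (g : B) (f : ℕ → B), IsLUB (Set.range fun n => f n ⊓ g) (ts g f) := by
  -- upper bound property
  have hub : ∀ (g : B) (f : ℕ → B) (n : ℕ), f n ⊓ g ≤ ts g f := by
    intro g f n
    induction n generalizing f with
    | zero => rw [hTS2 g f]; exact le_sup_left
    | succ n ih =>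
      rw [hTS2 g f]
      exact le_sup_of_le_right (ih fun k => f (k + 1))
  -- least property
  have hlub : ∀ (g h : B) (f : ℕ → B), (∀ n, f n ⊓ g ≤ h) → ts g f ≤ h := by
    intro g h f hf
    have : (fun n => f n ⊓ g) = fun n => (f n ⊓ g) ⊓ h := by
      funext n; rw [inf_eq_left.mpr (hf n)]
    calc ts g f = ts g fun n => f n ⊓ g := hTS1 g f
      _ = ts g fun n => (f n ⊓ g) ⊓ h := by rw [this]
      _ ≤ h := hTS3 g h fun n => f n ⊓ g
  have hIsLUB : ∀ (g : B) (f : ℕ → B), IsLUB (Set.range fun n => f n ⊓ g) (ts g f) := by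
    intro g f
    constructor
    · rintro x ⟨n, rfl⟩; exact hub g f n
    · intro h hh
      exact hlub g h f fun n => hh ⟨n, rfl⟩
  refine ⟨?_, hIsLUB⟩
  intro A hne hcnt ⟨b, hb⟩
  obtain ⟨f, rfl⟩ := Set.Countable.exists_eq_range hcnt hne
  refine ⟨ts b f, ?_⟩
  have : Set.range f = Set.range fun n => f n ⊓ b := by
    ext x
    constructor
    · rintro ⟨n, rfl⟩; exact ⟨n, inf_eq_left.mpr (hb ⟨n, rfl⟩)⟩
    · rintro ⟨n, rfl⟩
      exact ⟨n, (inf_eq_left.mpr (hb ⟨n, rfl⟩)).symm⟩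
  rw [this]
  exact hIsLUB b f
end

section
/- Let G be a Dedekind σ-complete lattice-ordered abelian group and let tr : G → G be a unary operation such that: (T2) tr f ≥ 0 for all f ≥ 0; (T3) f ∧ tr g ≤ tr f ≤ f for all f, g ≥ 0; (T4) for all f ≥ 0, tr f = 0 implies f = 0. Then for every f ≥ 0, f = sup_{n∈ℕ} ((n · tr f) ∧ f), where n · tr f denotes the n-fold sum tr f + ⋯ + tr f. -/
/-!
Let `s` be the supremum of the truncations `(n • tr f) ⊓ f`, which exists by σ-completeness, and
let `g = f - s ≥ 0`. Since `(n • tr f) ⊓ f + tr f ⊓ g ≤ ((n + 1) • tr f) ⊓ f`, the element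
`s - tr f ⊓ g` is again an upper bound, so `tr f ⊓ g ≤ 0`. By (T3) `tr` is monotone on `G⁺`
and `tr g ≤ g`, hence `0 ≤ tr g ≤ tr f ⊓ g ≤ 0`, and (T4) gives `g = 0`.
-/

open Set

section LatticeOrderedGroup

variable {G : Type*} [Lattice G] [AddCommGroup G] [AddLeftMono G]

theorem nsmul_inf_add_inf_sub_le (a f : G) (n : ℕ) :
    n • a ⊓ f + a ⊓ (f - n • a ⊓ f) ≤ (n + 1) • a ⊓ f :=
  calc n • a ⊓ f + a ⊓ (f - n • a ⊓ f)
      = (n • a ⊓ f + a) ⊓ f := by rw [add_inf, add_sub_cancel]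
    _ ≤ (n + 1) • a ⊓ f := by
      gcongr
      rw [succ_nsmul]
      exact add_le_add_left inf_le_left a

theorem inf_sub_le_zero_of_isLUB_nsmul_inf {a f s : G}
    (hs : IsLUB (range fun n : ℕ => n • a ⊓ f) s) : a ⊓ (f - s) ≤ 0 := by
  have hbound : s - a ⊓ (f - s) ∈ upperBounds (range fun n : ℕ => n • a ⊓ f) := by
    rintro _ ⟨n, rfl⟩
    have hn : n • a ⊓ f ≤ s := hs.1 ⟨n, rfl⟩
    rw [le_sub_iff_add_le]
    calc n • a ⊓ f + a ⊓ (f - s)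
        ≤ n • a ⊓ f + a ⊓ (f - n • a ⊓ f) := by gcongr
      _ ≤ (n + 1) • a ⊓ f := nsmul_inf_add_inf_sub_le a f n
      _ ≤ s := hs.1 ⟨n + 1, rfl⟩
  simpa using hs.2 hbound

end LatticeOrderedGroup

theorem DedekindSigmaComplete.exists_isLUB_range {G : Type*} [Preorder G]
    (hG : DedekindSigmaComplete G) (u : ℕ → G) (hu : BddAbove (range u)) :
    ∃ s, IsLUB (range u) s :=
  hG _ (range_nonempty u) (countable_range u) hu

theorem tr_mono_of_T3 {G : Type*} [Lattice G] [Zero G] {tr : G → G}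
    (hT3 : ∀ f g : G, 0 ≤ f → 0 ≤ g → f ⊓ tr g ≤ tr f ∧ tr f ≤ f)
    {f g : G} (hg : 0 ≤ g) (hgf : g ≤ f) : tr g ≤ tr f := by
  have htrg : tr g ≤ f := (hT3 g f hg (hg.trans hgf)).2.trans hgf
  simpa [inf_eq_right.mpr htrg] using (hT3 f g (hg.trans hgf) hg).1

theorem sup_nsmul_trunc_of_T4 {G : Type*} [Lattice G] [AddCommGroup G]
    [CovariantClass G G (· + ·) (· ≤ ·)]
    (hG : DedekindSigmaComplete G) (tr : G → G)
    (hT2 : ∀ f : G, 0 ≤ f → 0 ≤ tr f)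
    (hT3 : ∀ f g : G, 0 ≤ f → 0 ≤ g → f ⊓ tr g ≤ tr f ∧ tr f ≤ f)
    (hT4 : ∀ f : G, 0 ≤ f → tr f = 0 → f = 0) :
    ∀ f : G, 0 ≤ f → IsLUB (Set.range fun n : ℕ => (n • tr f) ⊓ f) f := by
  intro f hf
  have hfub : f ∈ upperBounds (range fun n : ℕ => n • tr f ⊓ f) := by
    rintro _ ⟨n, rfl⟩
    exact inf_le_right
  obtain ⟨s, hs⟩ := hG.exists_isLUB_range _ ⟨f, hfub⟩
  have hs0 : 0 ≤ s := by simpa [inf_eq_left.mpr hf] using hs.1 ⟨0, rfl⟩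
  have hsf : s ≤ f := hs.2 hfub
  have hg : 0 ≤ f - s := sub_nonneg.mpr hsf
  have htrg : tr (f - s) = 0 := by
    refine le_antisymm ?_ (hT2 _ hg)
    calc tr (f - s) ≤ tr f ⊓ (f - s) :=
          le_inf (tr_mono_of_T3 hT3 hg (sub_le_self f hs0)) (hT3 _ f hg hf).2
      _ ≤ 0 := inf_sub_le_zero_of_isLUB_nsmul_inf hs
  rwa [← sub_eq_zero.mp (hT4 _ hg htrg)] at hs
end

section
/- Let G be a Dedekind σ-complete lattice-ordered abelian group and let tr : G → G be a unary operation such that: (T2) tr f ≥ 0 for all f ≥ 0; (T3) f ∧ tr g ≤ tr f ≤ f for all f, g ≥ 0; (T5) for all f ≥ 0, if n·f = tr(n·f) for every n ∈ ℕ, then f = 0. Then for every f ≥ 0, f = sup_{n∈ℕ} ((n·f − tr(n·f)) ∧ f), where n·f denotes the n-fold sum f + ⋯ + f. -/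
section Aux
variable {G : Type*} [Lattice G] [AddCommGroup G] [CovariantClass G G (· + ·) (· ≤ ·)]

lemma aux_add_inf_zero {a b c : G} (ha : 0 ≤ a) (hb : 0 ≤ b) (hc : 0 ≤ c)
    (hac : a ⊓ c = 0) (hbc : b ⊓ c = 0) : (a + b) ⊓ c = 0 := by
  have h1 : (a + b) ⊓ c ≤ b := by
    calc (a + b) ⊓ c ≤ (a + b) ⊓ (c + b) :=
          inf_le_inf_left _ (le_add_of_nonneg_right hb)
      _ = (a ⊓ c) + b := (inf_add a c b).symm
      _ = b := by rw [hac, zero_add]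
  have h2 : (a + b) ⊓ c ≤ 0 := by
    calc (a + b) ⊓ c ≤ b ⊓ c := le_inf h1 inf_le_right
      _ = 0 := hbc
  exact le_antisymm h2 (le_inf (add_nonneg ha hb) hc)

lemma aux_nsmul_inf_zero {a c : G} (ha : 0 ≤ a) (hc : 0 ≤ c)
    (hac : a ⊓ c = 0) : ∀ n : ℕ, (n • a) ⊓ c = 0 := by
  intro n
  induction n with
  | zero => simpa using inf_of_le_left hc
  | succ m ih =>
    rw [succ_nsmul]
    exact aux_add_inf_zero (nsmul_nonneg ha m) ha hc ih hac

lemma aux_nsmul_inf_nsmul_zero {a c : G} (ha : 0 ≤ a) (hc : 0 ≤ c)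
    (hac : a ⊓ c = 0) (n : ℕ) : (n • a) ⊓ (n • c) = 0 := by
  have h1 : (n • a) ⊓ c = 0 := aux_nsmul_inf_zero ha hc hac n
  have h2 : (n • c) ⊓ (n • a) = 0 :=
    aux_nsmul_inf_zero hc (nsmul_nonneg ha n) (by rw [inf_comm, h1]) n
  rw [inf_comm, h2]

lemma aux_nsmul_posPart (c : G) (n : ℕ) : n • (c ⊔ 0) = (n • c) ⊔ 0 := by
  have hdisj : (c ⊔ 0) ⊓ ((-c) ⊔ 0) = 0 := by
    simpa [posPart_def, negPart_def] using posPart_inf_negPart_eq_zero c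
  have h := aux_nsmul_inf_nsmul_zero le_sup_right le_sup_right hdisj n
  have key : n • (c ⊔ 0) = n • (c ⊔ 0) - (n • (c ⊔ 0)) ⊓ (n • ((-c) ⊔ 0)) := by
    rw [h, sub_zero]
  rw [key, sub_inf, sub_self]
  have h2 : n • (c ⊔ 0) - n • ((-c) ⊔ 0) = n • c := by
    rw [← smul_sub]
    congr 1
    simpa [posPart_def, negPart_def] using posPart_sub_negPart c
  rw [h2, sup_comm]

end Aux

theorem sup_nsmul_sub_trunc_of_T5 {G : Type*} [Lattice G] [AddCommGroup G]
    [CovariantClass G G (· + ·) (· ≤ ·)]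
    (hG : DedekindSigmaComplete G) (tr : G → G)
    (hT2 : ∀ f : G, 0 ≤ f → 0 ≤ tr f)
    (hT3 : ∀ f g : G, 0 ≤ f → 0 ≤ g → f ⊓ tr g ≤ tr f ∧ tr f ≤ f)
    (hT5 : ∀ f : G, 0 ≤ f → (∀ n : ℕ, n • f = tr (n • f)) → f = 0) :
    ∀ f : G, 0 ≤ f → IsLUB (Set.range fun n : ℕ => (n • f - tr (n • f)) ⊓ f) f := by
  letI : DistribLattice G := AddCommGroup.toDistribLattice G
  intro f hf
  have htr0 : tr 0 = 0 := le_antisymm (hT3 0 0 le_rfl le_rfl).2 (hT2 0 le_rfl)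
  set F : ℕ → G := fun n => (n • f - tr (n • f)) ⊓ f with hF
  have hub : f ∈ upperBounds (Set.range F) := by
    rintro _ ⟨n, rfl⟩; exact inf_le_right
  obtain ⟨s, hs⟩ := hG (Set.range F) (Set.range_nonempty F) (Set.countable_range F)
    ⟨f, hub⟩
  have hsf : s ≤ f := hs.2 hub
  have h0s : 0 ≤ s := by
    have h := hs.1 ⟨0, rfl⟩
    simpa [hF, htr0, inf_of_le_left hf] using h
  set d := f - s with hd
  have hd0 : 0 ≤ d := sub_nonneg.2 hsf
  have hdf : d ≤ f := sub_le_self _ h0s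
  -- key inequality : n • d ≤ tr (n • f)
  have key : ∀ n : ℕ, n • d ≤ tr (n • f) := by
    intro n
    cases n with
    | zero => simp [htr0, hT2 0 le_rfl, htr0.ge]
    | succ m =>
      set n := m + 1
      have hnf : (0 : G) ≤ n • f := nsmul_nonneg hf n
      set t := tr (n • f) with ht
      have ht0 : 0 ≤ t := hT2 _ hnf
      set e := t + f - n • f with he
      set c := e ⊓ f with hc
      have h1 : d ≤ e ⊔ 0 := by
        have hFle : F n ≤ s := hs.1 ⟨n, rfl⟩
        have : d ≤ f - F n := sub_le_sub_left hFle f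
        calc d ≤ f - F n := this
          _ = (f - (n • f - t)) ⊔ (f - f) := sub_inf (n • f - t) f f
          _ = e ⊔ 0 := by rw [sub_self]; congr 1; rw [he]; abel
      have h2 : d ≤ c ⊔ 0 := by
        have : d ≤ (e ⊔ 0) ⊓ (f ⊔ 0) := le_inf h1 (hdf.trans le_sup_left)
        rwa [← sup_inf_right] at this
      have h3 : (n • c) ⊔ 0 ≤ t := by
        refine sup_le ?_ ht0
        have hcm : m • c ≤ m • f := nsmul_le_nsmul_right inf_le_right m
        calc n • c = c + m • c := by rw [add_comm, ← succ_nsmul]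
          _ ≤ e + m • f := add_le_add inf_le_left hcm
          _ = t := by rw [he, succ_nsmul]; abel
      calc n • d ≤ n • (c ⊔ 0) := nsmul_le_nsmul_right h2 n
        _ = (n • c) ⊔ 0 := aux_nsmul_posPart c n
        _ ≤ t := h3
  have hdd : ∀ n : ℕ, n • d = tr (n • d) := by
    intro n
    have hnd : (0 : G) ≤ n • d := nsmul_nonneg hd0 n
    have hge : n • d ≤ tr (n • d) := by
      have h := (hT3 (n • d) (n • f) hnd (nsmul_nonneg hf n)).1
      rwa [inf_of_le_left (key n)] at h
    exact le_antisymm hge (hT3 (n • d) 0 hnd le_rfl).2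
  have hzero : d = 0 := hT5 d hd0 hdd
  have hsd : s = f := (sub_eq_zero.1 hzero).symm
  exact hsd ▸ hs
end

section
/- Let G be a Dedekind σ-complete lattice-ordered abelian group and let tr : G → G be a unary operation such that: (T2) tr f ≥ 0 for all f ≥ 0, and (T3) f ∧ tr g ≤ tr f ≤ f for all f, g ≥ 0. Then for all a, b ∈ G with a ≥ 0 and b ≥ 0, tr(a + b) ≤ tr a + tr b. -/
theorem trunc_subadditive {G : Type*} [Lattice G] [AddCommGroup G]
    [CovariantClass G G (· + ·) (· ≤ ·)]
    (hG : DedekindSigmaComplete G) (tr : G → G)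
    (hT2 : ∀ f : G, 0 ≤ f → 0 ≤ tr f)
    (hT3 : ∀ f g : G, 0 ≤ f → 0 ≤ g → f ⊓ tr g ≤ tr f ∧ tr f ≤ f) :
    ∀ a b : G, 0 ≤ a → 0 ≤ b → tr (a + b) ≤ tr a + tr b := by
  intro a b ha hb
  have hab : 0 ≤ a + b := add_nonneg ha hb
  set c := tr (a + b) with hc
  have hc0 : 0 ≤ c := hT2 _ hab
  have hcab : c ≤ a + b := (hT3 (a + b) (a + b) hab hab).2
  -- c ⊓ b ≤ tr b
  have h1 : c ⊓ b ≤ tr b := by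
    have := (hT3 b (a + b) hb hab).1
    simpa [inf_comm] using this
  -- x := c - c ⊓ b
  have hx_le_a : c - c ⊓ b ≤ a := by
    have : c - b ≤ a := by
      have := sub_le_sub_right hcab b
      simpa [add_sub_cancel_right] using this
    calc c - c ⊓ b ≤ (c - c) ⊔ (c - b) := by
          rw [sub_inf]
        _ ≤ a := by
          simp only [sub_self]
          exact sup_le ha this
  have hx_le_c : c - c ⊓ b ≤ c := by
    have : (0 : G) ≤ c ⊓ b := le_inf hc0 hb
    exact sub_le_self _ this
  have h2 : c - c ⊓ b ≤ tr a :=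
    le_trans (le_inf hx_le_a hx_le_c) (hT3 a (a + b) ha hab).1
  calc c = (c - c ⊓ b) + c ⊓ b := (sub_add_cancel c (c ⊓ b)).symm
    _ ≤ tr a + tr b := add_le_add h2 h1
end
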